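/- Let g : (k+1)^U → ℝ be monotonically non-decreasing and k-submodular, fix 𝐕 ∈ (k+1)^U, and let 𝐒 ≼ 𝐕 and 𝐔 = (U_1,…,U_k) with U_j ⊆ V_j \ S_j for each j. Then Σ_{j=1}^k g(S_1,…,S_{j−1}, S_j ∪ U_j, S_{j+1},…,S_k) ≥ g(𝐒 ⊔ 𝐔) + (k−1) g(𝐒), where 𝐒 ⊔ 𝐔 has j-th component S_j ∪ U_j. -/

import Mathlib

/-- A `k`-tuple of subsets is pairwise disjoint (i.e. it is an element of `(k+1)^U`). -/
def PwDisj {α : Type*} {k : ℕ} (S : Fin k → Finset α) : Prop :=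
  ∀ i j : Fin k, i ≠ j → Disjoint (S i) (S j)

/-- The meet `𝐒 ⊓ 𝐓`, with `i`-th component `S i ∩ T i`. -/
def kInf {α : Type*} [DecidableEq α] {k : ℕ} (S T : Fin k → Finset α) :
    Fin k → Finset α := fun i => S i ∩ T i

/-- The join `𝐒 ⊔ 𝐓`, with `i`-th component `(S i ∪ T i) \ ∪_{j ≠ i} (S j ∪ T j)`. -/
def kSup {α : Type*} [DecidableEq α] {k : ℕ} (S T : Fin k → Finset α) :
    Fin k → Finset α :=
  fun i => (S i ∪ T i) \ ((Finset.univ.erase i).biUnion fun j => S j ∪ T j)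

/-! Raise the coordinates of `𝐒` to those of `𝐖 = 𝐒 ⊔ 𝐔` one at a time. Applying
`k`-submodularity to the current tuple and to `𝐒` with only the next coordinate raised, their meet
is `𝐒` and their join is the next tuple, because every tuple in sight lies below the pairwise
disjoint `𝐖`; summing these `k` inequalities telescopes to the claim. -/

theorem PwDisj.mono {α : Type*} {k : ℕ} {V W : Fin k → Finset α} (hV : PwDisj V)
    (hWV : W ≤ V) : PwDisj W :=
  fun i j hij => (hV i j hij).mono (hWV i) (hWV j)

theorem pwDisj_piecewise {α : Type*} {k : ℕ} {S W : Fin k → Finset α} (hSW : S ≤ W)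
    (hW : PwDisj W) (s : Finset (Fin k)) : PwDisj (s.piecewise W S) :=
  hW.mono (Finset.piecewise_le_of_le_of_le s le_rfl hSW)

section KLattice

variable {α : Type*} [DecidableEq α] {k : ℕ}

theorem kSup_eq_of_pwDisj {S T : Fin k → Finset α} (h : PwDisj fun i => S i ∪ T i) :
    kSup S T = fun i => S i ∪ T i := by
  funext i
  refine Finset.sdiff_eq_self_of_disjoint ((Finset.disjoint_biUnion_right _ _ _).2 fun j hj => ?_)
  exact h i j (Finset.ne_of_mem_erase hj).symm

variable {S W : Fin k → Finset α}

theorem kInf_piecewise_of_disjoint (hSW : S ≤ W) {s t : Finset (Fin k)} (hst : Disjoint s t) :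
    kInf (s.piecewise W S) (t.piecewise W S) = S := by
  funext i
  have hSWi : S i ⊆ W i := hSW i
  by_cases hs : i ∈ s
  · have ht : i ∉ t := Finset.disjoint_left.1 hst hs
    simp [kInf, hs, ht, Finset.inter_eq_right.2 hSWi]
  · by_cases ht : i ∈ t <;> simp [kInf, hs, ht, Finset.inter_eq_left.2 hSWi]

theorem kSup_piecewise (hSW : S ≤ W) (hW : PwDisj W) (s t : Finset (Fin k)) :
    kSup (s.piecewise W S) (t.piecewise W S) = (s ∪ t).piecewise W S := by
  have hunion : (fun i => s.piecewise W S i ∪ t.piecewise W S i) = (s ∪ t).piecewise W S := by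
    funext i
    have hSWi : S i ⊆ W i := hSW i
    by_cases hs : i ∈ s <;> by_cases ht : i ∈ t <;>
      simp [hs, ht, Finset.union_eq_left.2 hSWi, Finset.union_eq_right.2 hSWi]
  rw [kSup_eq_of_pwDisj (hunion ▸ pwDisj_piecewise hSW hW _), hunion]

end KLattice

theorem piecewise_add_card_mul_le_sum_update {α : Type*} [DecidableEq α] {k : ℕ}
    (g : (Fin k → Finset α) → ℝ)
    (hgsub : ∀ S T : Fin k → Finset α, PwDisj S → PwDisj T →
      g (kInf S T) + g (kSup S T) ≤ g S + g T)
    {S W : Fin k → Finset α} (hSW : S ≤ W) (hW : PwDisj W) (s : Finset (Fin k)) :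
    g (s.piecewise W S) + (s.card : ℝ) * g S ≤ g S + ∑ j ∈ s, g (Function.update S j (W j)) := by
  induction s using Finset.induction_on with
  | empty => simp
  | insert j s hj ih =>
    have hstep := hgsub _ _ (pwDisj_piecewise hSW hW {j}) (pwDisj_piecewise hSW hW s)
    rw [kInf_piecewise_of_disjoint hSW (Finset.disjoint_singleton_left.2 hj),
      kSup_piecewise hSW hW, ← Finset.insert_eq, Finset.piecewise_singleton] at hstep
    rw [Finset.sum_insert hj, Finset.card_insert_of_notMem hj]
    push_cast
    linarith

theorem sum_update_ge_join_add_general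
    {α : Type*} [DecidableEq α] {k : ℕ}
    (g : (Fin k → Finset α) → ℝ)
    (hgsub : ∀ S T : Fin k → Finset α, PwDisj S → PwDisj T →
      g (kInf S T) + g (kSup S T) ≤ g S + g T)
    (V S U : Fin k → Finset α) (hV : PwDisj V)
    (hSV : ∀ j, S j ⊆ V j)
    (hU : ∀ j, U j ⊆ V j \ S j) :
    g (fun j => S j ∪ U j) + ((k : ℝ) - 1) * g S ≤
      ∑ j, g (Function.update S j (S j ∪ U j)) := by
  have hSW : S ≤ fun j => S j ∪ U j := fun j => Finset.subset_union_left
  have hW : PwDisj fun j => S j ∪ U j :=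
    hV.mono fun j => Finset.union_subset (hSV j) ((hU j).trans Finset.sdiff_subset)
  have h := piecewise_add_card_mul_le_sum_update g hgsub hSW hW Finset.univ
  rw [Finset.piecewise_univ, Finset.card_univ, Fintype.card_fin] at h
  linarith

/-- For a monotonically non-decreasing `k`-submodular `g`, a tuple
`𝐒 ≼ 𝐕` and `U_j ⊆ V_j \ S_j` for each `j`, one has
`Σ_j g(S_1,…,S_j ∪ U_j,…,S_k) ≥ g(𝐒 ⊔ 𝐔) + (k−1) g(𝐒)`, where the `j`-th component of
`𝐒 ⊔ 𝐔` is `S_j ∪ U_j`. -/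
theorem sum_update_ge_join_add
    {α : Type*} [Fintype α] [DecidableEq α] {k : ℕ}
    (g : (Fin k → Finset α) → ℝ)
    (hgmono : ∀ S T : Fin k → Finset α, PwDisj S → PwDisj T →
      (∀ i, S i ⊆ T i) → g S ≤ g T)
    (hgsub : ∀ S T : Fin k → Finset α, PwDisj S → PwDisj T →
      g (kInf S T) + g (kSup S T) ≤ g S + g T)
    (V S U : Fin k → Finset α) (hV : PwDisj V)
    (hS : PwDisj S) (hSV : ∀ j, S j ⊆ V j)
    (hU : ∀ j, U j ⊆ V j \ S j) :
    g (fun j => S j ∪ U j) + ((k : ℝ) - 1) * g S ≤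
      ∑ j, g (Function.update S j (S j ∪ U j)) :=
  sum_update_ge_join_add_general g hgsub V S U hV hSV hU
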